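/- arXiv:0805.1345 — 4 statements merged into one kernel-verified Lean document; each statement's English description precedes it below -/
import Mathlib

section
/- Let p be a prime, r ≥ 1 an integer, and d₁, …, d_r positive integers such that p does not divide d_i for at least one i; set d = d₁ + ⋯ + d_r. Then for every integer δ ≥ (p−1)(d−1) − 1, the number of tuples (i₀, i₁, …, i_r) ∈ ℕ^{r+1} with 0 ≤ i_j ≤ p−1 for j = 1, …, r and p·i₀ + Σ_{j=1}^r i_j·d_j ≤ δ satisfies: 2·(this number) = p^{r−1}·(2(δ+1) − (p−1)(d−1)). -/
/-! Group the tuples by `(i₁, …, i_r) ∈ {0, …, p-1}^r`. For such a tuple of weight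
`s = ∑ i_j d_j` the admissible `i₀` are those with `p i₀ ≤ δ - s`; since `δ - s ≥ -p`, there are
exactly `(δ - s + p - (δ - s) mod p) / p` of them. Over the box, `∑ s = p^(r-1) · p(p-1)/2 · d`,
and since some `d_{j₀}` is a unit mod `p`, moving `i_{j₀}` alone makes `(δ - s) mod p` run through
all residues, so `∑ (δ - s) mod p = p^(r-1) · p(p-1)/2`. -/

open Finset

theorem Fintype.sum_eq_card_pow_smul_of_sum_update {ι α M : Type*} [Fintype ι] [DecidableEq ι]
    [Fintype α] [Nonempty α] [AddCommMonoid M] (j : ι) {G : (ι → α) → M} {A : M}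
    (hG : ∀ x, ∑ a, G (Function.update x j a) = A) :
    ∑ x, G x = Fintype.card α ^ (Fintype.card ι - 1) • A := by
  have hfiber (y : {k // k ≠ j} → α) : ∑ a, G ((Equiv.funSplitAt j α).symm (a, y)) = A := by
    convert hG ((Equiv.funSplitAt j α).symm (Classical.arbitrary α, y)) using 3 with a
    ext k
    by_cases hk : k = j
    · subst hk; simp
    · simp [hk]
  rw [← (Equiv.funSplitAt j α).symm.sum_comp, Fintype.sum_prod_type_right]
  simp [hfiber]

theorem sum_emod_sub_mul_eq_sum {p u : ℕ} (hu : u.Coprime p) (c : ℤ) :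
    ∑ a : Fin p, (c - a * u) % (p : ℤ) = ∑ a : Fin p, (a : ℤ) := by
  obtain _ | n := p
  · simp
  let e : ZMod (n + 1) ≃ ZMod (n + 1) :=
    (Units.mulRight (ZMod.unitOfCoprime u hu)).trans (Equiv.subLeft (c : ZMod (n + 1)))
  have key (a : ZMod (n + 1)) : (c - a.val * u) % ((n + 1 : ℕ) : ℤ) = ((e a).val : ℤ) := by
    rw [← ZMod.val_intCast]
    congr 1
    push_cast
    rw [ZMod.natCast_zmod_val]
    rfl
  exact (Fintype.sum_congr _ _ key).trans (e.sum_comp (fun z => (z.val : ℤ)))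

theorem two_mul_sum_fin_val (p : ℕ) : 2 * ∑ a : Fin p, (a : ℤ) = p * (p - 1) := by
  have h := sum_range_id_mul_two p
  rw [Fin.sum_univ_eq_sum_range (fun a => (a : ℤ)), mul_comm]
  rcases p with _ | p
  · simp
  · have h' := congrArg (Nat.cast : ℕ → ℤ) h
    push_cast at h'
    simpa using h'

theorem nat_mul_le_iff_lt_toNat {p : ℕ} (hp : 0 < p) (t : ℤ) (m : ℕ) :
    (p : ℤ) * m ≤ t ↔ m < (t / p + 1).toNat := by
  rw [mul_comm, ← Int.le_ediv_iff_mul_le (by exact_mod_cast hp)]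
  omega

def finEquivNatMulLe {p : ℕ} (hp : 0 < p) (t : ℤ) :
    Fin (t / p + 1).toNat ≃ {m : ℕ // (p : ℤ) * m ≤ t} :=
  Fin.equivSubtype.trans (Equiv.subtypeEquivRight fun m => (nat_mul_le_iff_lt_toNat hp t m).symm)

theorem mul_card_nat_mul_le {p : ℕ} (hp : 0 < p) {t : ℤ} (ht : -p ≤ t) :
    (p : ℤ) * Nat.card {m : ℕ // (p : ℤ) * m ≤ t} = t + p - t % p := by
  have hq : -1 ≤ t / p := by
    rw [Int.le_ediv_iff_mul_le (by exact_mod_cast hp)]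
    linarith
  rw [← Nat.card_congr (finEquivNatMulLe hp t), Nat.card_fin, Int.toNat_of_nonneg (by omega)]
  linarith [Int.mul_ediv_add_emod t p]

theorem card_box_mul_add_le_eq_sum {ι : Type*} [Fintype ι] [DecidableEq ι] {p : ℕ} (hp : 0 < p)
    (w : ι → ℕ) (δ : ℤ) :
    Nat.card {x : ℕ × (ι → ℕ) //
        (∀ j, x.2 j ≤ p - 1) ∧ (p : ℤ) * x.1 + ∑ j, (x.2 j : ℤ) * (w j : ℤ) ≤ δ} =
      ∑ x : ι → Fin p, Nat.card {m : ℕ // (p : ℤ) * m ≤ δ - ∑ j, ((x j : ℕ) : ℤ) * w j} := by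
  have (x : ι → Fin p) := Finite.of_equiv _ (finEquivNatMulLe hp (δ - ∑ j, ((x j : ℕ) : ℤ) * w j))
  rw [← Nat.card_sigma]
  refine Nat.card_congr
    { toFun := fun x => ⟨fun j => ⟨x.1.2 j, by have := x.2.1 j; omega⟩, x.1.1, ?_⟩
      invFun := fun y => ⟨(y.2.1, fun j => y.1 j), fun j => Nat.le_sub_one_of_lt (y.1 j).isLt, ?_⟩
      left_inv := fun _ => rfl
      right_inv := fun _ => rfl }
  · linarith [x.2.2]
  · linarith [y.2.2]

theorem sum_fin_mul_le {ι : Type*} [Fintype ι] {p : ℕ} (x : ι → Fin p) (w : ι → ℕ) :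
    ∑ j, ((x j : ℕ) : ℤ) * w j ≤ (p - 1) * ∑ j, (w j : ℤ) := by
  rw [mul_sum]
  gcongr with j
  have := (x j).isLt
  omega

section BoxSums

variable {ι : Type*} [Fintype ι] [DecidableEq ι] {p : ℕ}

theorem sum_pi_fin_sum_mul [NeZero p] (w : ι → ℤ) :
    ∑ x : ι → Fin p, ∑ j, ((x j : ℕ) : ℤ) * w j =
      p ^ (Fintype.card ι - 1) * ((∑ a : Fin p, (a : ℤ)) * ∑ j, w j) := by
  rw [sum_comm, mul_sum, mul_sum]
  refine sum_congr rfl fun j _ => ?_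
  rw [Fintype.sum_eq_card_pow_smul_of_sum_update j (A := (∑ a : Fin p, (a : ℤ)) * w j)]
  · simp
  · simp [sum_mul]

theorem sum_update_val_mul {w : ι → ℕ} (x : ι → Fin p) (j₀ : ι) (a : Fin p) :
    ∑ j, ((Function.update x j₀ a j : ℕ) : ℤ) * w j =
      ∑ j, ((x j : ℕ) : ℤ) * w j + ((a : ℤ) - x j₀) * w j₀ := by
  have hupd : (fun j => ((Function.update x j₀ a j : ℕ) : ℤ) * w j) =
      Function.update (fun j => ((x j : ℕ) : ℤ) * w j) j₀ ((a : ℤ) * w j₀) := by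
    ext j
    by_cases hj : j = j₀
    · subst hj; simp
    · simp [hj]
  rw [hupd, sum_update_of_mem (mem_univ j₀), sum_eq_add_sum_sdiff_singleton_of_mem (mem_univ j₀)]
  ring

theorem sum_pi_fin_emod [NeZero p] {w : ι → ℕ} {j₀ : ι} (hj₀ : (w j₀).Coprime p) (c : ℤ) :
    ∑ x : ι → Fin p, (c - ∑ j, ((x j : ℕ) : ℤ) * w j) % p =
      p ^ (Fintype.card ι - 1) * ∑ a : Fin p, (a : ℤ) := by
  rw [Fintype.sum_eq_card_pow_smul_of_sum_update j₀ (A := ∑ a : Fin p, (a : ℤ))]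
  · simp
  · intro x
    simp_rw [sum_update_val_mul]
    convert sum_emod_sub_mul_eq_sum hj₀ (c - ∑ j, ((x j : ℕ) : ℤ) * w j + x j₀ * w j₀) using 3
    ring

end BoxSums

theorem card_monomials_superelliptic_general (p : ℕ) (hp : p.Prime) (r : ℕ)
    (dv : Fin r → ℕ) (hnd : ∃ i, ¬ (p ∣ dv i))
    (d : ℕ) (hd : d = ∑ j, dv j) (δ : ℤ) (hδ : ((p : ℤ) - 1) * ((d : ℤ) - 1) - 1 ≤ δ) :
    2 * (Nat.card {x : ℕ × (Fin r → ℕ) //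
        (∀ j, x.2 j ≤ p - 1) ∧ ((p : ℤ) * x.1 + ∑ j, (x.2 j : ℤ) * (dv j : ℤ)) ≤ δ} : ℤ)
      = (p : ℤ) ^ (r - 1) * (2 * (δ + 1) - ((p : ℤ) - 1) * ((d : ℤ) - 1)) := by
  obtain ⟨i₀, hi₀⟩ := hnd
  have : NeZero p := ⟨hp.ne_zero⟩
  have hd' : (d : ℤ) = ∑ j, (dv j : ℤ) := by rw [hd, Nat.cast_sum]
  set s : (Fin r → Fin p) → ℤ := fun x => ∑ j, ((x j : ℕ) : ℤ) * dv j
  have hcount (x : Fin r → Fin p) : (p : ℤ) * Nat.card {m : ℕ // (p : ℤ) * m ≤ δ - s x} =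
      δ + p - s x - (δ - s x) % p := by
    rw [mul_card_nat_mul_le hp.pos]
    · ring
    · nlinarith [sum_fin_mul_le x dv]
  have hpow : (p : ℤ) ^ r = p * p ^ (r - 1) := by
    rw [← pow_succ', Nat.sub_add_cancel i₀.pos]
  have hcop : (dv i₀).Coprime p := (hp.coprime_iff_not_dvd.mpr hi₀).symm
  apply mul_left_cancel₀ (show (p : ℤ) ≠ 0 by exact_mod_cast hp.ne_zero)
  calc (p : ℤ) * (2 * _)
      = 2 * ∑ x, (p : ℤ) * Nat.card {m : ℕ // (p : ℤ) * m ≤ δ - s x} := by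
        rw [card_box_mul_add_le_eq_sum hp.pos, Nat.cast_sum, mul_left_comm, mul_sum]
    _ = 2 * (p ^ r * (δ + p) - ∑ x, s x - ∑ x, (δ - s x) % p) := by
        simp [hcount, sum_sub_distrib]
    _ = _ := by
      rw [sum_pi_fin_sum_mul, sum_pi_fin_emod hcop, hpow, Fintype.card_fin, ← hd']
      linear_combination (-((p : ℤ) ^ (r - 1) * d) - (p : ℤ) ^ (r - 1)) * two_mul_sum_fin_val p

/-- Let `p` be a prime, `r ≥ 1`, and `d₁, …, d_r` positive integers with
`p ∤ dᵢ` for at least one `i`; set `d = d₁ + ⋯ + d_r`. Then for every integer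
`δ ≥ (p-1)(d-1) - 1`, twice the number of tuples `(i₀, i₁, …, i_r) ∈ ℕ^{r+1}` with
`0 ≤ i_j ≤ p-1` for `j = 1, …, r` and `p·i₀ + Σ_j i_j·d_j ≤ δ` equals
`p^(r-1)·(2(δ+1) - (p-1)(d-1))`. -/
theorem card_monomials_superelliptic (p : ℕ) (hp : p.Prime) (r : ℕ) (hr : 1 ≤ r)
    (dv : Fin r → ℕ) (hdv : ∀ j, 0 < dv j) (hnd : ∃ i, ¬ (p ∣ dv i))
    (d : ℕ) (hd : d = ∑ j, dv j) (δ : ℤ) (hδ : ((p : ℤ) - 1) * ((d : ℤ) - 1) - 1 ≤ δ) :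
    2 * (Nat.card {x : ℕ × (Fin r → ℕ) //
        (∀ j, x.2 j ≤ p - 1) ∧ ((p : ℤ) * x.1 + ∑ j, (x.2 j : ℤ) * (dv j : ℤ)) ≤ δ} : ℤ)
      = (p : ℤ) ^ (r - 1) * (2 * (δ + 1) - ((p : ℤ) - 1) * ((d : ℤ) - 1)) :=
  card_monomials_superelliptic_general p hp r dv hnd d hd δ hδ
end

section
/- Let p be a prime, r ≥ 1 an integer, and d₁, …, d_r positive integers such that p divides d_i for every i = 1, …, r; set d = d₁ + ⋯ + d_r. Then for every nonnegative integer δ with p·⌊δ/p⌋ ≥ (p−1)(d−2) − 1, the number of tuples (i₀, i₁, …, i_r) ∈ ℕ^{r+1} with 0 ≤ i_j ≤ p−1 for j = 1, …, r and p·i₀ + Σ_{j=1}^r i_j·d_j ≤ δ satisfies: 2·(this number) = p^{r−1}·(2(p·⌊δ/p⌋ + 1) − (p−1)(d−2)). -/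
/-!
Write `dᵢ = p eᵢ` and `m = ⌊δ/p⌋`; the condition becomes `i₀ + Σ iⱼ eⱼ ≤ m`, so for a fixed
`(i₁, …, i_r)` in the box `{0, …, p-1}^r` there are `m + 1 - Σ iⱼ eⱼ` choices of `i₀`. The bound on
`δ` says `(p-1) Σ eⱼ ≤ m + 1`, so none of these counts is truncated. The involution
`iⱼ ↦ p - 1 - iⱼ` of the box pairs the linear form `Σ iⱼ eⱼ` with `(p-1) Σ eⱼ - Σ iⱼ eⱼ`, hence
twice the count is `p^r (2(m+1) - (p-1) Σ eⱼ)`.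
-/

open Finset

theorem card_add_le_eq_sum {α : Type*} (T : Finset α) (w : α → ℕ) (m : ℕ) :
    Nat.card {x : ℕ × α // x.2 ∈ T ∧ x.1 + w x.2 ≤ m} = ∑ i ∈ T, (m + 1 - w i) := by
  classical
  have hS : ∀ x : ℕ × α, x ∈ (range (m + 1) ×ˢ T).filter (fun x => x.1 + w x.2 ≤ m) ↔
      x.2 ∈ T ∧ x.1 + w x.2 ≤ m := by
    intro x
    simp only [mem_filter, mem_product, mem_range]
    exact ⟨fun ⟨⟨_, hT⟩, hle⟩ => ⟨hT, hle⟩, fun ⟨hT, hle⟩ => ⟨⟨by omega, hT⟩, hle⟩⟩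
  rw [← Nat.card_congr (Equiv.subtypeEquivRight hS), Nat.card_eq_finsetCard, card_filter,
    sum_product_right]
  refine sum_congr rfl fun i _ => ?_
  have hfiber : (range (m + 1)).filter (fun a => a + w i ≤ m) = range (m + 1 - w i) := by
    ext a
    simp only [mem_filter, mem_range]
    omega
  rw [← card_filter, hfiber, card_range]

section Box

variable {ι : Type*} [Fintype ι] [DecidableEq ι]

theorem sum_mul_le_of_mem_piFinset_range {p : ℕ} {i : ι → ℕ}
    (hi : i ∈ Fintype.piFinset fun _ => range p) (e : ι → ℕ) :
    ∑ j, i j * e j ≤ (p - 1) * ∑ j, e j := by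
  rw [mul_sum]
  refine sum_le_sum fun j _ => Nat.mul_le_mul_right _ ?_
  have := mem_range.1 (Fintype.mem_piFinset.1 hi j)
  omega

theorem two_mul_sum_piFinset_range_sum_mul (p : ℕ) (e : ι → ℕ) :
    2 * ∑ i ∈ Fintype.piFinset (fun _ : ι => range p), ∑ j, i j * e j
      = p ^ Fintype.card ι * ((p - 1) * ∑ j, e j) := by
  set box := Fintype.piFinset fun _ : ι => range p
  set w : (ι → ℕ) → ℕ := fun i => ∑ j, i j * e j
  let flip : (ι → ℕ) → ι → ℕ := fun i j => p - 1 - i j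
  have hlt : ∀ i ∈ box, ∀ j, i j < p := fun i hi j => mem_range.1 (Fintype.mem_piFinset.1 hi j)
  have hflip_mem : ∀ i ∈ box, flip i ∈ box := fun i hi =>
    Fintype.mem_piFinset.2 fun j => mem_range.2 (by have := hlt i hi j; simp only [flip]; omega)
  have hflip_flip : ∀ i ∈ box, flip (flip i) = i := fun i hi =>
    funext fun j => by have := hlt i hi j; simp only [flip]; omega
  have hpair : ∀ i ∈ box, w i + w (flip i) = (p - 1) * ∑ j, e j := by
    intro i hi
    simp only [w, ← sum_add_distrib, ← add_mul, mul_sum]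
    exact sum_congr rfl fun j _ => by have := hlt i hi j; congr 1; simp only [flip]; omega
  have hsum_flip : ∑ i ∈ box, w i = ∑ i ∈ box, w (flip i) :=
    sum_nbij' flip flip hflip_mem hflip_mem hflip_flip hflip_flip
      fun i hi => by rw [hflip_flip i hi]
  calc 2 * ∑ i ∈ box, w i = ∑ i ∈ box, (w i + w (flip i)) := by
        rw [sum_add_distrib, ← hsum_flip, two_mul]
    _ = p ^ Fintype.card ι * ((p - 1) * ∑ j, e j) := by
        rw [sum_congr rfl hpair, sum_const, smul_eq_mul, Fintype.card_piFinset]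
        simp

theorem two_mul_sum_piFinset_range_sub_sum_mul {p m : ℕ} (hp : 0 < p) (e : ι → ℕ)
    (he : (p - 1) * ∑ j, e j ≤ m + 1) :
    2 * ((∑ i ∈ Fintype.piFinset (fun _ : ι => range p), (m + 1 - ∑ j, i j * e j) : ℕ) : ℤ)
      = p ^ Fintype.card ι * (2 * (m + 1) - ((p : ℤ) - 1) * ∑ j, (e j : ℤ)) := by
  have hle : ∀ i ∈ Fintype.piFinset (fun _ : ι => range p), ∑ j, i j * e j ≤ m + 1 :=
    fun i hi => (sum_mul_le_of_mem_piFinset_range hi e).trans he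
  have hlinear := congrArg (Nat.cast : ℕ → ℤ) (two_mul_sum_piFinset_range_sum_mul p e)
  push_cast [Nat.cast_sub (Nat.one_le_of_lt hp)] at hlinear
  rw [Nat.cast_sum, sum_congr rfl fun i hi => Nat.cast_sub (hle i hi), sum_sub_distrib, mul_sub,
    sum_const, Fintype.card_piFinset]
  push_cast at hlinear ⊢
  rw [hlinear]
  simp only [card_range, prod_const, card_univ]
  ring

end Box

theorem mul_add_sum_mul_mul_le_iff {ι : Type*} [Fintype ι] {p : ℕ} (hp : 0 < p) (a δ : ℕ)
    (i e : ι → ℕ) :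
    p * a + ∑ j, i j * (p * e j) ≤ δ ↔ a + ∑ j, i j * e j ≤ δ / p := by
  rw [Nat.le_div_iff_mul_le hp, add_mul, sum_mul, mul_comm a]
  simp only [mul_assoc, mul_comm (e _) p]

theorem card_monomials_superelliptic_of_dvd_general (p : ℕ) (hp : p.Prime) (r : ℕ) (hr : 1 ≤ r)
    (dv : Fin r → ℕ) (hpd : ∀ i, p ∣ dv i)
    (d : ℕ) (hd : d = ∑ j, dv j) (δ : ℕ)
    (hδ : ((p : ℤ) - 1) * ((d : ℤ) - 2) - 1 ≤ (p : ℤ) * ((δ / p : ℕ) : ℤ)) :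
    2 * (Nat.card {x : ℕ × (Fin r → ℕ) //
        (∀ j, x.2 j ≤ p - 1) ∧ p * x.1 + ∑ j, x.2 j * dv j ≤ δ} : ℤ)
      = (p : ℤ) ^ (r - 1) * (2 * ((p : ℤ) * ((δ / p : ℕ) : ℤ) + 1) - ((p : ℤ) - 1) * ((d : ℤ) - 2)) := by
  obtain ⟨e, rfl⟩ : ∃ e : Fin r → ℕ, dv = fun j => p * e j :=
    ⟨fun j => dv j / p, funext fun j => (Nat.mul_div_cancel' (hpd j)).symm⟩
  subst hd
  set m := δ / p
  have hp0 : 0 < p := hp.pos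
  have hbound : (p - 1) * ∑ j, e j ≤ m + 1 := by
    zify [hp0]
    push_cast [← mul_sum] at hδ
    have hneg : (p : ℤ) * ((p - 1) * ∑ j, (e j : ℤ) - (m + 2)) < 0 := by linarith
    linarith [neg_of_mul_neg_right hneg (Int.natCast_nonneg p)]
  have hcount : ∀ x : ℕ × (Fin r → ℕ),
      ((∀ j, x.2 j ≤ p - 1) ∧ p * x.1 + ∑ j, x.2 j * (p * e j) ≤ δ) ↔
        x.2 ∈ Fintype.piFinset (fun _ => range p) ∧ x.1 + ∑ j, x.2 j * e j ≤ m := by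
    intro x
    simp only [Fintype.mem_piFinset, mem_range, mul_add_sum_mul_mul_le_iff hp0, m]
    refine and_congr_left' (forall_congr' fun j => ?_)
    omega
  rw [Nat.card_congr (Equiv.subtypeEquivRight hcount),
    card_add_le_eq_sum (Fintype.piFinset fun _ => range p) (fun i => ∑ j, i j * e j) m,
    two_mul_sum_piFinset_range_sub_sum_mul hp0 e hbound, Fintype.card_fin]
  beta_reduce
  obtain ⟨s, rfl⟩ : ∃ s, r = s + 1 := ⟨r - 1, by omega⟩
  rw [← mul_sum]
  push_cast
  ring

/-- Let `p` be a prime, `r ≥ 1`, and `d₁, …, d_r` positive integers with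
`p ∣ dᵢ` for every `i`; set `d = d₁ + ⋯ + d_r`. Then for every nonnegative integer `δ` with
`p·⌊δ/p⌋ ≥ (p-1)(d-2) - 1`, twice the number of tuples `(i₀, i₁, …, i_r) ∈ ℕ^{r+1}` with
`0 ≤ i_j ≤ p-1` for `j = 1, …, r` and `p·i₀ + Σ_j i_j·d_j ≤ δ` equals
`p^(r-1)·(2(p·⌊δ/p⌋ + 1) - (p-1)(d-2))`. -/
theorem card_monomials_superelliptic_of_dvd (p : ℕ) (hp : p.Prime) (r : ℕ) (hr : 1 ≤ r)
    (dv : Fin r → ℕ) (hdv : ∀ j, 0 < dv j) (hpd : ∀ i, p ∣ dv i)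
    (d : ℕ) (hd : d = ∑ j, dv j) (δ : ℕ)
    (hδ : ((p : ℤ) - 1) * ((d : ℤ) - 2) - 1 ≤ (p : ℤ) * ((δ / p : ℕ) : ℤ)) :
    2 * (Nat.card {x : ℕ × (Fin r → ℕ) //
        (∀ j, x.2 j ≤ p - 1) ∧ p * x.1 + ∑ j, x.2 j * dv j ≤ δ} : ℤ)
      = (p : ℤ) ^ (r - 1) * (2 * ((p : ℤ) * ((δ / p : ℕ) : ℤ) + 1) - ((p : ℤ) - 1) * ((d : ℤ) - 2)) :=
  card_monomials_superelliptic_of_dvd_general p hp r hr dv hpd d hd δ hδ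
end

section
/- Let p be a prime and K a number field with ring of integers O_K. Let F be a formal power series in K[[X]] with constant coefficient 1 such that every coefficient of the power series F^p lies in O_K. Then for every integer k ≥ 1, p^{2k−1} times the coefficient of X^k in F lies in O_K. -/
/-!
Write `c = p` and `a_k` for the coefficients of `F`. Rescaling `X ↦ c²X` turns `F` into `1 + c B`,
where `B = ∑_{k ≥ 1} c^(2k-1) a_k X^k` carries exactly the numbers we want to show integral.
Comparing coefficients of `X^k` in `(1 + c B)^p = F^p(c²X)` gives
`c^(2k) [F^p]_k = c² [B]_k + ∑_{j ≥ 2} (p choose j) c^j [B^j]_k`.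
After cancelling `c²`, this expresses `[B]_k` through `[F^p]_k` and the `[B^j]_k` with `j ≥ 2`,
which involve only `[B]_m` for `m < k` because `B` has no constant term; induct on `k`.
-/

open PowerSeries Finset

namespace PowerSeries

section CommRing

variable {R : Type*} [CommRing R] {S : Subring R}

theorem coeff_pow_mem_of_forall_lt_mem {f : R⟦X⟧} {k : ℕ} (hf : ∀ m < k, coeff m f ∈ S)
    (j : ℕ) : ∀ m < k, coeff m (f ^ j) ∈ S := by
  induction j with
  | zero =>
    intro m _
    rw [pow_zero, coeff_one]
    split_ifs
    exacts [one_mem S, zero_mem S]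
  | succ j ih =>
    intro m hm
    rw [pow_succ, coeff_mul]
    refine sum_mem fun ab hab => mul_mem (ih _ ?_) (hf _ ?_) <;>
      linarith [HasAntidiagonal.antidiagonal.fst_le hab, HasAntidiagonal.antidiagonal.snd_le hab]

theorem coeff_pow_mem_of_constantCoeff_eq_zero {f : R⟦X⟧} (hf0 : constantCoeff f = 0) {k : ℕ}
    (hf : ∀ m < k, coeff m f ∈ S) {j : ℕ} (hj : 2 ≤ j) : coeff k (f ^ j) ∈ S := by
  obtain ⟨g, rfl⟩ := X_dvd_iff.mpr hf0
  rw [mul_pow, coeff_X_pow_mul']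
  split_ifs with hjk
  · refine coeff_pow_mem_of_forall_lt_mem (k := k - 1) (fun m hm => ?_) j _ (by omega)
    rw [← coeff_succ_X_mul]
    exact hf _ (by omega)
  · exact zero_mem S

end CommRing

theorem coeff_one_add_C_mul_pow {R : Type*} [CommSemiring R] (c : R) (B : R⟦X⟧) (n k : ℕ) :
    coeff k ((1 + C c * B) ^ n) = ∑ j ∈ range (n + 1), n.choose j * c ^ j * coeff k (B ^ j) := by
  rw [add_comm, add_pow, map_sum]
  refine sum_congr rfl fun j _ => ?_
  rw [one_pow, mul_one, mul_pow, ← map_pow, ← map_natCast (C (R := R)), mul_comm, ← mul_assoc,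
    ← map_mul, coeff_C_mul, mul_comm (n.choose j : R)]

theorem coeff_eq_of_one_add_C_mul_pow {R : Type*} [CommRing R] [IsDomain R] {n : ℕ}
    (hn : (n : R) ≠ 0) {B G : R⟦X⟧} (h : (1 + C (n : R) * B) ^ n = rescale ((n : R) ^ 2) G)
    (m : ℕ) :
    coeff (m + 1) B = (n : R) ^ (2 * m) * coeff (m + 1) G -
      ∑ i ∈ range (n - 1), n.choose (i + 2) * (n : R) ^ i * coeff (m + 1) (B ^ (i + 2)) := by
  obtain ⟨N, rfl⟩ : ∃ N, n = N + 1 := Nat.exists_eq_succ_of_ne_zero (by rintro rfl; simp at hn)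
  set c : R := ((N + 1 : ℕ) : R)
  have hcoeff := congrArg (coeff (m + 1)) h
  rw [coeff_one_add_C_mul_pow, coeff_rescale, sum_range_succ', sum_range_succ'] at hcoeff
  simp only [zero_add, Nat.choose_zero_right, Nat.choose_one_right, pow_zero, pow_one, coeff_one,
    if_neg m.succ_ne_zero, mul_zero, add_zero] at hcoeff
  rw [sum_congr rfl fun i _ => show _ = c ^ 2 * ((N + 1).choose (i + 2) * c ^ i *
    coeff (m + 1) (B ^ (i + 2))) by ring, ← mul_sum] at hcoeff
  apply mul_left_cancel₀ (pow_ne_zero 2 hn)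
  rw [Nat.add_sub_cancel]
  linear_combination hcoeff

theorem natCast_pow_mul_coeff_mem_of_pow_coeff_mem {K : Type*} [Field K] (S : Subring K)
    {n : ℕ} {F : K⟦X⟧} (hF0 : constantCoeff F = 1) (hFn : ∀ k, coeff k (F ^ n) ∈ S) (k : ℕ)
    (hk : 1 ≤ k) : (n : K) ^ (2 * k - 1) * coeff k F ∈ S := by
  rcases eq_or_ne (n : K) 0 with hn | hn
  · simp [hn, show 2 * k - 1 ≠ 0 by omega]
  set B := C (n : K)⁻¹ * (rescale ((n : K) ^ 2) F - 1)
  have hB0 : constantCoeff B = 0 := by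
    rw [← coeff_zero_eq_constantCoeff_apply, coeff_C_mul, map_sub, coeff_rescale, coeff_one,
      if_pos rfl, pow_zero, one_mul, coeff_zero_eq_constantCoeff_apply, hF0, sub_self, mul_zero]
  have hB_succ (m : ℕ) : coeff (m + 1) B = (n : K) ^ (2 * m + 1) * coeff (m + 1) F := by
    rw [coeff_C_mul, map_sub, coeff_rescale, coeff_one, if_neg m.succ_ne_zero, sub_zero]
    field_simp
    ring
  have hpow : (1 + C (n : K) * B) ^ n = rescale ((n : K) ^ 2) (F ^ n) := by
    rw [map_pow, ← mul_assoc, ← map_mul, mul_inv_cancel₀ hn, map_one, one_mul, add_sub_cancel]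
  have hB (k : ℕ) : coeff k B ∈ S := by
    induction k using Nat.strong_induction_on with
    | _ k ih =>
      cases k with
      | zero => rw [coeff_zero_eq_constantCoeff_apply, hB0]; exact zero_mem S
      | succ m =>
        rw [coeff_eq_of_one_add_C_mul_pow hn hpow m]
        exact sub_mem (mul_mem (pow_mem (natCast_mem _ _) _) (hFn _)) (sum_mem fun i _ =>
          mul_mem (mul_mem (natCast_mem _ _) (pow_mem (natCast_mem _ _) _))
            (coeff_pow_mem_of_constantCoeff_eq_zero hB0 ih (by omega)))
  obtain ⟨m, rfl⟩ := Nat.exists_eq_add_of_le' hk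
  rw [show 2 * (m + 1) - 1 = 2 * m + 1 by omega, ← hB_succ]
  exact hB _

end PowerSeries

theorem pow_mul_coeff_isIntegral_of_pow_coeff_isIntegral_general
    (p : ℕ) (K : Type*) [Field K]
    (F : PowerSeries K) (hF0 : PowerSeries.constantCoeff F = 1)
    (hFp : ∀ k : ℕ, IsIntegral ℤ (PowerSeries.coeff k (F ^ p))) :
    ∀ k : ℕ, 1 ≤ k → IsIntegral ℤ ((p : K) ^ (2 * k - 1) * PowerSeries.coeff k F) :=
  natCast_pow_mul_coeff_mem_of_pow_coeff_mem (integralClosure ℤ K).toSubring hF0 hFp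

/-- Let `p` be a prime and `K` a number field with ring of integers `O_K`.
Let `F ∈ K⟦X⟧` be a formal power series with constant coefficient `1` such that every
coefficient of `F^p` is an algebraic integer (i.e. lies in `O_K`). Then for every `k ≥ 1`,
`p^(2k-1)` times the coefficient of `X^k` in `F` is an algebraic integer. -/
theorem pow_mul_coeff_isIntegral_of_pow_coeff_isIntegral
    (p : ℕ) (hp : p.Prime) (K : Type*) [Field K] [NumberField K]
    (F : PowerSeries K) (hF0 : PowerSeries.constantCoeff F = 1)
    (hFp : ∀ k : ℕ, IsIntegral ℤ (PowerSeries.coeff k (F ^ p))) :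
    ∀ k : ℕ, 1 ≤ k → IsIntegral ℤ ((p : K) ^ (2 * k - 1) * PowerSeries.coeff k F) :=
  pow_mul_coeff_isIntegral_of_pow_coeff_isIntegral_general p K F hF0 hFp
end

section
/- Let p be a prime and l ≥ 1 an integer. Then p^{2l−1}·binom(1/p, l) is an integer, where binom(1/p, l) denotes the generalized binomial coefficient (1/p)·(1/p − 1)·(1/p − 2)⋯(1/p − l + 1) / l! ∈ ℚ. -/
/-!
Clearing denominators, `p ^ (2l-1) * binom(1/p, l) = p ^ (l-1) * ∏_{i<l} (1 - i p) / l!`, so it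
suffices that `l!` divides the numerator. Split `l! = p ^ α * m` with `p ∤ m`. Legendre's formula
gives `α ≤ l - 1`. Since `p` is invertible modulo `m`, the product `∏ (1 - i p)` is congruent
modulo `m` to a unit times a product of `l` consecutive integers, which `l!`, hence `m`, divides.
-/

open Finset Nat

theorem dvd_prod_add_mul_of_dvd_factorial {m b : ℤ} (a : ℤ) {l : ℕ} (hm : m ∣ l !)
    (hmb : IsCoprime m b) : m ∣ ∏ i ∈ range l, (a + i * b) := by
  obtain ⟨u, v, huv⟩ := hmb
  have hcongr : v ^ l * ∏ i ∈ range l, (a + i * b) ≡ ∏ i ∈ range l, (v * a + i) [ZMOD m] := by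
    rw [pow_eq_prod_const, ← prod_mul_distrib]
    refine Int.ModEq.prod fun i _ => Int.modEq_iff_dvd.mpr ⟨i * u, ?_⟩
    linear_combination -(i : ℤ) * huv
  have hmv : IsCoprime m (v ^ l) := IsCoprime.pow_right ⟨u, b, by linear_combination huv⟩
  exact hmv.dvd_of_dvd_mul_left <|
    hcongr.dvd_iff.mpr (hm.trans (factorial_coe_dvd_prod l (v * a)))

theorem factorization_factorial_le_sub_one {p : ℕ} (hp : p.Prime) (l : ℕ) :
    (l !).factorization p ≤ l - 1 := by
  rcases eq_or_ne l 0 with rfl | hl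
  · simp
  have : Fact p.Prime := ⟨hp⟩
  have := padicValNat_factorial_lt_of_ne_zero p hl
  rw [factorization_def _ hp]
  omega

theorem factorial_dvd_prime_pow_mul_prod_sub {p : ℕ} (hp : p.Prime) (a : ℤ) (l : ℕ) :
    (l ! : ℤ) ∣ p ^ (l - 1) * ∏ i ∈ range l, (a - i * p) := by
  have hsplit : (l ! : ℤ) = p ^ (l !).factorization p * (ordCompl[p] l ! : ℕ) := by
    exact_mod_cast (ordProj_mul_ordCompl_eq_self l ! p).symm
  have hcop : IsCoprime (ordCompl[p] l ! : ℤ) (-p) :=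
    (isCoprime_iff_coprime.mpr (coprime_ordCompl hp (factorial_ne_zero l))).symm.neg_right
  have hprod := dvd_prod_add_mul_of_dvd_factorial a (Int.natCast_dvd_natCast.mpr
    (ordCompl_dvd l ! p)) hcop
  simp only [mul_neg, ← sub_eq_add_neg] at hprod
  rw [hsplit]
  exact mul_dvd_mul (pow_dvd_pow _ (factorization_factorial_le_sub_one hp l)) hprod

theorem pow_mul_prod_range_inv_sub {K : Type*} [Field K] {x : K} (hx : x ≠ 0) (l : ℕ) :
    x ^ l * ∏ i ∈ range l, (x⁻¹ - i) = ∏ i ∈ range l, (1 - i * x) := by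
  rw [pow_eq_prod_const, ← prod_mul_distrib]
  exact prod_congr rfl fun i _ => by field_simp

theorem pow_mul_genBinomial_one_div_prime_isInteger_general
    (p : ℕ) (hp : p.Prime) (l : ℕ) :
    ∃ z : ℤ, (p : ℚ) ^ (2 * l - 1) *
      ((∏ i ∈ Finset.range l, ((1 : ℚ) / p - i)) / l.factorial) = z := by
  obtain ⟨z, hz⟩ := factorial_dvd_prime_pow_mul_prod_sub hp 1 l
  refine ⟨z, ?_⟩
  have hnum : (p : ℚ) ^ (2 * l - 1) * ∏ i ∈ range l, ((1 : ℚ) / p - i) = l ! * z := by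
    have hcast := congrArg (Int.cast : ℤ → ℚ) hz
    push_cast at hcast
    rw [show 2 * l - 1 = (l - 1) + l by omega, pow_add, mul_assoc, one_div,
      pow_mul_prod_range_inv_sub (by exact_mod_cast hp.ne_zero), hcast]
  rw [← mul_div_assoc, hnum, mul_div_cancel_left₀ _ (by positivity)]

/-- Let `p` be a prime and `l ≥ 1` an integer. Then
`p^(2l-1) * binom(1/p, l)` is an integer, where `binom(1/p, l)` is the generalized
binomial coefficient `(1/p)(1/p - 1)⋯(1/p - l + 1)/l!`. -/
theorem pow_mul_genBinomial_one_div_prime_isInteger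
    (p : ℕ) (hp : p.Prime) (l : ℕ) (hl : 1 ≤ l) :
    ∃ z : ℤ, (p : ℚ) ^ (2 * l - 1) *
      ((∏ i ∈ Finset.range l, ((1 : ℚ) / p - i)) / l.factorial) = z :=
  pow_mul_genBinomial_one_div_prime_isInteger_general p hp l
end
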